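/- A computational-basis measurement of one qubit of a graph state removes the measured vertex from the graph: for a finite simple graph G on vertex set Fin n with n ≥ 1 and a vertex p, one has (⟨0|_p ⊗ I)|G⟩ = (1/√2)·|G − p⟩ and (⟨1|_p ⊗ I)|G⟩ = (1/√2)·(∏_{u ∈ N_G(p)} Z_u)|G − p⟩, where G − p is the induced subgraph of G on the remaining n−1 vertices, ⟨b|_p denotes contraction of qubit p against the computational basis vector |b⟩ (producing an (n−1)-qubit state), N_G(p) is the neighbourhood of p in G, and Z_u applies Z = [[1,0],[0,-1]] to qubit u. -/

import Mathlib

open scoped Matrix BigOperators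
open scoped Classical

noncomputable section

/-- The state space of `n` qubits: amplitudes indexed by bit strings. -/
abbrev QState (n : ℕ) := (Fin n → Fin 2) → ℂ

/-- Operators on `n` qubits, as matrices indexed by bit strings. -/
abbrev QOp (n : ℕ) := Matrix (Fin n → Fin 2) (Fin n → Fin 2) ℂ

def PauliX : Matrix (Fin 2) (Fin 2) ℂ := !![0, 1; 1, 0]
def PauliY : Matrix (Fin 2) (Fin 2) ℂ := !![0, -Complex.I; Complex.I, 0]
def PauliZ : Matrix (Fin 2) (Fin 2) ℂ := !![1, 0; 0, -1]

/-- The Hadamard matrix. -/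
def Hmat : Matrix (Fin 2) (Fin 2) ℂ := ((1 / Real.sqrt 2 : ℝ) : ℂ) • !![1, 1; 1, -1]

/-- `Z_θ = diag(1, e^{iθ})`. -/
def Zrot (θ : ℝ) : Matrix (Fin 2) (Fin 2) ℂ := !![1, 0; 0, Complex.exp (θ * Complex.I)]

/-- `X_θ = H · Z_θ · H`. -/
def Xrot (θ : ℝ) : Matrix (Fin 2) (Fin 2) ℂ := Hmat * Zrot θ * Hmat

/-- The single-qubit Pauli group: matrices `i^k · g` with `g ∈ {I,X,Y,Z}`. -/
def Pauli1 : Set (Matrix (Fin 2) (Fin 2) ℂ) :=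
  {M | ∃ (k : Fin 4) (g : Matrix (Fin 2) (Fin 2) ℂ),
    g ∈ ({1, PauliX, PauliY, PauliZ} : Set (Matrix (Fin 2) (Fin 2) ℂ)) ∧
    M = Complex.I ^ (k : ℕ) • g}

/-- A single-qubit Clifford unitary: a unitary normalizing the Pauli group. -/
def IsClifford1 (U : Matrix (Fin 2) (Fin 2) ℂ) : Prop :=
  U ∈ Matrix.unitaryGroup (Fin 2) ℂ ∧ ∀ g ∈ Pauli1, U * g * Uᴴ ∈ Pauli1

/-- The single-qubit operator `A` acting on qubit `v` (identity elsewhere). -/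
def applyOn {n : ℕ} (v : Fin n) (A : Matrix (Fin 2) (Fin 2) ℂ) : QOp n :=
  Matrix.of fun x y => if ∀ u, u ≠ v → x u = y u then A (x v) (y v) else 0

/-- The tensor product `A 0 ⊗ A 1 ⊗ ⋯ ⊗ A (n-1)` of single-qubit operators. -/
def tensorOp {n : ℕ} (A : Fin n → Matrix (Fin 2) (Fin 2) ℂ) : QOp n :=
  Matrix.of fun x y => ∏ j, A j (x j) (y j)

/-- The diagonal phase `(-1)^{x_u · x_v}` attached to an edge `e = {u,v}`. -/
def czPhase {n : ℕ} (e : Sym2 (Fin n)) (x : Fin n → Fin 2) : ℂ :=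
  Sym2.lift ⟨fun u v => (-1 : ℂ) ^ ((x u : ℕ) * (x v : ℕ)),
    fun u v => by dsimp only; rw [mul_comm ((x u : ℕ)) ((x v : ℕ))]⟩ e

/-- The controlled-Z operator on qubits `u`, `v`: diagonal with entries `(-1)^{x_u x_v}`. -/
def CZop {n : ℕ} (u v : Fin n) : QOp n :=
  Matrix.diagonal fun x => (-1 : ℂ) ^ ((x u : ℕ) * (x v : ℕ))

/-- The product of the (commuting, diagonal) controlled-Z operators over a set of edges. -/
def CZofEdges {n : ℕ} (E : Finset (Sym2 (Fin n))) : QOp n :=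
  Matrix.diagonal fun x => ∏ e ∈ E, czPhase e x

/-- The state `|+⟩^{⊗n}`. -/
def plusState (n : ℕ) : QState n := fun _ => ((1 / Real.sqrt 2 : ℝ) : ℂ) ^ n

/-- The basis state `|0⟩^{⊗n}`. -/
def ket0 (n : ℕ) : QState n := fun x => if x = fun _ => 0 then 1 else 0

/-- The graph state `|G⟩ = (∏_{{u,v} ∈ E} CZ_{u,v}) |+⟩^{⊗n}`. -/
def graphState {n : ℕ} (G : SimpleGraph (Fin n)) : QState n :=
  (CZofEdges G.edgeFinset).mulVec (plusState n)

/-- Local complementation of `G` about the vertex `v`: the edges inside the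
neighbourhood of `v` are toggled. -/
def localComp {V : Type*} (G : SimpleGraph V) (v : V) : SimpleGraph V where
  Adj a b := (G.Adj a v ∧ G.Adj b v ∧ a ≠ b ∧ ¬ G.Adj a b) ∨ (G.Adj a b ∧ ¬ (G.Adj a v ∧ G.Adj b v))
  symm := by
    constructor
    intro a b h
    rcases h with ⟨h1, h2, h3, h4⟩ | ⟨h1, h2⟩
    · exact Or.inl ⟨h2, h1, h3.symm, fun hc => h4 hc.symm⟩
    · exact Or.inr ⟨h1.symm, fun hc => h2 ⟨hc.2, hc.1⟩⟩
  loopless := by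
    constructor
    intro a h
    rcases h with ⟨_, _, h3, _⟩ | ⟨h1, _⟩
    · exact h3 rfl
    · exact G.ne_of_adj h1 rfl

/-- The (diagonal) product `∏_{u ∈ S} Z_u` of Pauli `Z` operators over the qubits in `S`. -/
def pauliZprod {n : ℕ} (S : Finset (Fin n)) : QOp n :=
  Matrix.diagonal fun x => ∏ u ∈ S, PauliZ (x u) (x u)

/-- The `n`-qubit Pauli group: matrices `i^k · (g_1 ⊗ ⋯ ⊗ g_n)` with `g_j ∈ {I,X,Y,Z}`. -/
def PauliGroup (n : ℕ) : Set (QOp n) :=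
  {M | ∃ (k : Fin 4) (g : Fin n → Matrix (Fin 2) (Fin 2) ℂ),
    (∀ j, g j ∈ ({1, PauliX, PauliY, PauliZ} : Set (Matrix (Fin 2) (Fin 2) ℂ))) ∧
    M = Complex.I ^ (k : ℕ) • tensorOp g}

/-- An `n`-qubit Clifford unitary: a unitary normalizing the `n`-qubit Pauli group. -/
def IsCliffordN (n : ℕ) (U : QOp n) : Prop :=
  U ∈ Matrix.unitaryGroup (Fin n → Fin 2) ℂ ∧ ∀ g ∈ PauliGroup n, U * g * Uᴴ ∈ PauliGroup n

/-- The six-element set `R` of allowed vertex operators of an rGS-LC diagram. -/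
def Rset : Set (Matrix (Fin 2) (Fin 2) ℂ) :=
  {M | (∃ k : Fin 4, M = Zrot ((k : ℕ) * (Real.pi / 2))) ∨
    M = Xrot (Real.pi / 2) * Zrot (Real.pi / 2) ∨
    M = Xrot (Real.pi / 2) * Zrot (3 * Real.pi / 2)}

/-- The two elements of `R` that have a red node. -/
def hasRedNode (M : Matrix (Fin 2) (Fin 2) ℂ) : Prop :=
  M = Xrot (Real.pi / 2) * Zrot (Real.pi / 2) ∨ M = Xrot (Real.pi / 2) * Zrot (3 * Real.pi / 2)

/-- An rGS-LC datum: all vertex operators in `R`, and no two adjacent vertices both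
have vertex operators with a red node. -/
def IsRGSLC {n : ℕ} (G : SimpleGraph (Fin n)) (A : Fin n → Matrix (Fin 2) (Fin 2) ℂ) : Prop :=
  (∀ v, A v ∈ Rset) ∧ ∀ v w, G.Adj v w → ¬ (hasRedNode (A v) ∧ hasRedNode (A w))

/-- The state `|G; A⟩ = (A_1 ⊗ ⋯ ⊗ A_n)|G⟩` of a GS-LC datum. -/
def rgslcState {n : ℕ} (G : SimpleGraph (Fin n)) (A : Fin n → Matrix (Fin 2) (Fin 2) ℂ) :
    QState n :=
  (tensorOp A).mulVec (graphState G)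

/-- A pair of rGS-LC data is simplified if there is no pair of vertices `p`, `q` with an
unpaired red node at `p` in the first diagram and at `q` in the second, `p`, `q` adjacent
in one of the graphs. -/
def SimplifiedPair {n : ℕ} (G₁ : SimpleGraph (Fin n)) (A : Fin n → Matrix (Fin 2) (Fin 2) ℂ)
    (G₂ : SimpleGraph (Fin n)) (B : Fin n → Matrix (Fin 2) (Fin 2) ℂ) : Prop :=
  ¬ ∃ p q, (hasRedNode (A p) ∧ ¬ hasRedNode (B p)) ∧ (hasRedNode (B q) ∧ ¬ hasRedNode (A q)) ∧
    (G₁.Adj p q ∨ G₂.Adj p q)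

/-- Contraction of qubit `p` of an `(n+1)`-qubit state against the computational basis
vector `|b⟩`, producing an `n`-qubit state. -/
def contractQubit {n : ℕ} (p : Fin (n + 1)) (b : Fin 2) (ψ : QState (n + 1)) : QState n :=
  fun x => ψ (p.insertNth b x)


lemma czPhase_mk {n : ℕ} (u v : Fin n) (x : Fin n → Fin 2) :
    czPhase s(u, v) x = (-1 : ℂ) ^ ((x u : ℕ) * (x v : ℕ)) := rfl

lemma pauliZ_diag (i : Fin 2) : PauliZ i i = (-1 : ℂ) ^ (i : ℕ) := by
  fin_cases i <;> simp [PauliZ]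

open Finset in
lemma prod_czPhase_insertNth {n : ℕ} (G : SimpleGraph (Fin (n + 1))) (p : Fin (n + 1))
    (b : Fin 2) (x : Fin n → Fin 2) :
    ∏ e ∈ G.edgeFinset, czPhase e (p.insertNth b x) =
      (∏ u ∈ Finset.univ.filter fun u => G.Adj p (p.succAbove u),
        (-1 : ℂ) ^ ((b : ℕ) * (x u : ℕ))) *
      ∏ e ∈ (G.comap p.succAbove).edgeFinset, czPhase e x := by
  rw [← Finset.prod_filter_mul_prod_filter_not G.edgeFinset (fun e => p ∈ e)]
  congr 1
  · refine (Finset.prod_bij (fun u _ => s(p, p.succAbove u)) ?_ ?_ ?_ ?_).symm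
    · intro u hu
      simp only [Finset.mem_filter, Finset.mem_univ, true_and] at hu
      simp [SimpleGraph.mem_edgeFinset, hu]
    · intro u₁ h₁ u₂ h₂ h
      rw [Sym2.eq_iff] at h
      rcases h with ⟨-, h⟩ | ⟨h, h'⟩
      · exact Fin.succAbove_right_injective h
      · exact absurd h' (Fin.succAbove_ne p u₁)
    · intro e he
      simp only [Finset.mem_filter, SimpleGraph.mem_edgeFinset] at he
      obtain ⟨⟨a, c⟩, rfl⟩ := e.exists_rep
      obtain ⟨hadj, hp⟩ := he
      rw [SimpleGraph.mem_edgeSet] at hadj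
      rw [Sym2.mem_iff] at hp
      rcases hp with rfl | rfl
      · obtain ⟨u, hu⟩ := Fin.exists_succAbove_eq (Ne.symm hadj.ne)
        refine ⟨u, ?_, ?_⟩
        · simp [hu, hadj]
        · show s(p, p.succAbove u) = s(p, c); rw [hu]
      · obtain ⟨u, hu⟩ := Fin.exists_succAbove_eq hadj.ne
        refine ⟨u, ?_, ?_⟩
        · simp [hu, hadj.symm]
        · show s(p, p.succAbove u) = s(a, p); rw [hu, Sym2.eq_swap]
    · intro u hu
      rw [czPhase_mk, Fin.insertNth_apply_same, Fin.insertNth_apply_succAbove]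
  · refine (Finset.prod_bij (fun e _ => e.map p.succAbove) ?_ ?_ ?_ ?_).symm
    · intro e he
      obtain ⟨⟨a, c⟩, rfl⟩ := e.exists_rep
      rw [SimpleGraph.mem_edgeFinset, SimpleGraph.mem_edgeSet] at he
      simp only [Finset.mem_filter, SimpleGraph.mem_edgeFinset, Sym2.map_pair_eq]
      refine ⟨he, ?_⟩
      rw [Sym2.mem_iff]
      push_neg
      exact ⟨(Fin.succAbove_ne p a).symm, (Fin.succAbove_ne p c).symm⟩
    · intro e₁ _ e₂ _ h
      exact Sym2.map.injective Fin.succAbove_right_injective h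
    · intro e he
      simp only [Finset.mem_filter, SimpleGraph.mem_edgeFinset] at he
      obtain ⟨⟨a, c⟩, rfl⟩ := e.exists_rep
      obtain ⟨hadj, hp⟩ := he
      rw [SimpleGraph.mem_edgeSet] at hadj
      rw [Sym2.mem_iff] at hp
      push_neg at hp
      obtain ⟨a', ha⟩ := Fin.exists_succAbove_eq (Ne.symm hp.1)
      obtain ⟨c', hc⟩ := Fin.exists_succAbove_eq (Ne.symm hp.2)
      refine ⟨s(a', c'), ?_, ?_⟩
      · rw [SimpleGraph.mem_edgeFinset, SimpleGraph.mem_edgeSet]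
        show G.Adj (p.succAbove a') (p.succAbove c')
        rw [ha, hc]; exact hadj
      · show Sym2.map p.succAbove s(a', c') = s(a, c)
        rw [Sym2.map_pair_eq, ha, hc]
    · intro e _
      obtain ⟨⟨a, c⟩, rfl⟩ := e.exists_rep
      show czPhase s(a, c) x = czPhase (Sym2.map p.succAbove s(a, c)) (p.insertNth b x)
      rw [Sym2.map_pair_eq, czPhase_mk, czPhase_mk,
        Fin.insertNth_apply_succAbove, Fin.insertNth_apply_succAbove]

/-- Computational-basis measurement of qubit `p` of a graph state: the outcome `0`
removes the vertex `p`; the outcome `1` additionally applies `Z` on all neighbours of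
`p`, in each case with amplitude factor `1/√2`. -/
theorem graphState_measurement {n : ℕ} (G : SimpleGraph (Fin (n + 1))) (p : Fin (n + 1)) :
    contractQubit p 0 (graphState G) =
      ((1 / Real.sqrt 2 : ℝ) : ℂ) • graphState (G.comap p.succAbove) ∧
    contractQubit p 1 (graphState G) =
      ((1 / Real.sqrt 2 : ℝ) : ℂ) •
        (pauliZprod (Finset.univ.filter fun u => G.Adj p (p.succAbove u))).mulVec
          (graphState (G.comap p.succAbove)) := by
  have key : ∀ b : Fin 2, contractQubit p b (graphState G) = fun x =>
      (∏ u ∈ Finset.univ.filter fun u => G.Adj p (p.succAbove u),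
        (-1 : ℂ) ^ ((b : ℕ) * (x u : ℕ))) *
      (((1 / Real.sqrt 2 : ℝ) : ℂ) * graphState (G.comap p.succAbove) x) := by
    intro b
    funext x
    simp only [contractQubit, graphState, CZofEdges, Matrix.mulVec_diagonal, plusState,
      prod_czPhase_insertNth, pow_succ]
    simp only [mul_comm, mul_left_comm, mul_assoc]
    congr!
  constructor
  · funext x
    rw [key 0]
    simp [Pi.smul_apply, smul_eq_mul]
  · funext x
    rw [key 1]
    simp only [Pi.smul_apply, smul_eq_mul, pauliZprod, Matrix.mulVec_diagonal]
    have : ∀ u, PauliZ (x u) (x u) = (-1 : ℂ) ^ ((1 : ℕ) * (x u : ℕ)) := by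
      intro u; rw [one_mul, pauliZ_diag]
    simp only [this, Fin.val_one]
    ring
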